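/- Let Y be a measurable space, π₀ a probability measure on Y, and r : Y → ℝ measurable, with π₀ a continuous model for r. Let β > 0, let Φ : [0,1] → ℝ be bounded measurable, set C := C_{r,π₀}, Z := ∫₀¹ e^{Φ(u)/β} du, and let π* be the probability measure with density y ↦ e^{Φ(C(y))/β}/Z with respect to π₀. Then for every N ≥ 1, the Worst-of-N win rate of π* against π₀ satisfies (π*)^{⊗N} ⊗ π₀^{⊗N}{((y₁,…,y_N),(z₁,…,z_N)) : min_i r(y_i) > min_j r(z_j)} = N·∫₀¹ (1 − F_{Φ,β}(u))^N · (1−u)^{N−1} du, and the event min_i r(y_i) = min_j r(z_j) has probability 0. -/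

import Mathlib

/-!
For a continuous model the calibrated reward is `C = G ∘ r`, where `G` is the cumulative
distribution function of `r` under `π₀`. `G` is continuous, so `C` is uniform on `(0, 1]` under
`π₀` (probability integral transform), and under `π*` it has density `e^{Φ/β} / Z`; hence
`π*{C > u} = 1 - F u`. The worst of `N` draws from `π₀` falls below a level `s` with probability
`1 - (1 - G s)^N = ∫₀^{G s} N (1 - u)^{N-1} du`, so integrating over the `π*` sample and
exchanging the integrals (layer-cake formula) gives `N ∫₀¹ P(G (min_i r yᵢ) > u) (1 - u)^{N-1} du`
for independent `yᵢ ~ π*`. As `G` is monotone, `G (min_i r yᵢ) > u` iff `C yᵢ > u` for every `i`,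
which has probability `(1 - F u)^N`. Ties are null because the worst reward is the reward of one
of the draws, and `r` has no atoms under `π₀`.
-/

open MeasureTheory ProbabilityTheory Set
open scoped ENNReal

namespace ProbabilityTheory

variable (μ : Measure ℝ) [IsProbabilityMeasure μ] [NullSingletonClass μ]

lemma continuous_cdf : Continuous (cdf μ) := by
  refine continuous_iff_continuousAt.2 fun x => ?_
  rw [(monotone_cdf μ).continuousAt_iff_leftLim_eq_rightLim, StieltjesFunction.rightLim_eq]
  have h := (cdf μ).measure_singleton x
  rw [measure_cdf, measure_singleton, eq_comm, ENNReal.ofReal_eq_zero] at h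
  exact le_antisymm ((monotone_cdf μ).leftLim_le le_rfl) (by linarith)

lemma exists_cdf_eq {c : ℝ} (hc0 : 0 < c) (hc1 : c < 1) : ∃ x, cdf μ x = c :=
  mem_range_of_exists_le_of_exists_ge (continuous_cdf μ)
    ((tendsto_cdf_atBot μ).eventually (eventually_le_nhds hc0)).exists
    ((tendsto_cdf_atTop μ).eventually (eventually_ge_nhds hc1)).exists

lemma measure_cdf_le {c : ℝ} (hc1 : c ≤ 1) : μ {x | cdf μ x ≤ c} = ENNReal.ofReal c := by
  rcases lt_or_ge c 0 with hc0 | hc0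
  · rw [ENNReal.ofReal_of_nonpos hc0.le, measure_eq_zero_iff_ae_notMem]
    exact ae_of_all _ fun x hx => (hc0.trans_le (cdf_nonneg μ x)).not_ge hx
  apply le_antisymm
  · refine le_of_forall_gt_imp_ge_of_dense fun a hca => ?_
    rcases lt_or_ge a 1 with ha1 | ha1
    · have hca' : c < a.toReal := (ENNReal.ofReal_lt_iff_lt_toReal hc0 ha1.ne_top).1 hca
      obtain ⟨y, hy⟩ := exists_cdf_eq μ (hc0.trans_lt hca')
        (ENNReal.toReal_lt_of_lt_ofReal (by simpa using ha1))
      calc μ {x | cdf μ x ≤ c} ≤ μ (Iic y) :=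
            measure_mono fun x hx => ((monotone_cdf μ).reflect_lt (hy ▸ hx.out.trans_lt hca')).le
        _ = a := by rw [← ofReal_cdf, hy, ENNReal.ofReal_toReal ha1.ne_top]
    · exact prob_le_one.trans ha1
  · rcases hc0.lt_or_eq with hc0 | rfl
    · rcases hc1.lt_or_eq with hc1 | rfl
      · obtain ⟨x, hx⟩ := exists_cdf_eq μ hc0 hc1
        calc ENNReal.ofReal c = μ (Iic x) := by rw [← hx, ofReal_cdf]
          _ ≤ μ {x | cdf μ x ≤ c} := measure_mono fun y hy => hx ▸ monotone_cdf μ hy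
      · simp [cdf_le_one]
    · simp

theorem map_cdf : μ.map (cdf μ) = volume.restrict (Ioc 0 1) := by
  have : IsProbabilityMeasure (μ.map (cdf μ)) :=
    Measure.isProbabilityMeasure_map (monotone_cdf μ).measurable.aemeasurable
  refine Measure.ext_of_Iic _ _ fun c => ?_
  have hset : cdf μ ⁻¹' Iic c = {x | cdf μ x ≤ min 1 c} := by
    ext x; simp [cdf_le_one]
  rw [Measure.map_apply (monotone_cdf μ).measurable measurableSet_Iic,
    Measure.restrict_apply measurableSet_Iic, inter_comm, Ioc_inter_Iic, hset,
    measure_cdf_le μ (min_le_left _ _), Real.volume_Ioc, sub_zero]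

end ProbabilityTheory

section Reward

variable {Y : Type*} [MeasurableSpace Y] {π₀ : Measure Y} {r : Y → ℝ}

lemma nullSingletonClass_map (hr : Measurable r) (hcont : ∀ t, π₀ {y | r y = t} = 0) :
    NullSingletonClass (π₀.map r) :=
  ⟨fun t => by rw [Measure.map_apply hr (measurableSet_singleton t)]; exact hcont t⟩

variable [IsProbabilityMeasure π₀]

lemma measure_lt_eq_ofReal_cdf_map (hr : Measurable r) [NullSingletonClass (π₀.map r)] (t : ℝ) :
    π₀ {y | r y < t} = ENNReal.ofReal (cdf (π₀.map r) t) := by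
  have := Measure.isProbabilityMeasure_map (μ := π₀) hr.aemeasurable
  rw [ofReal_cdf, ← measure_congr Iio_ae_eq_Iic, Measure.map_apply hr measurableSet_Iio]
  rfl

lemma calibrated_eq_cdf_map (hr : Measurable r) (hcont : ∀ t, π₀ {y | r y = t} = 0) (y : Y) :
    (π₀ {z | r z < r y}).toReal + 1 / 2 * (π₀ {z | r z = r y}).toReal
      = cdf (π₀.map r) (r y) := by
  have := nullSingletonClass_map hr hcont
  rw [hcont, measure_lt_eq_ofReal_cdf_map hr, ENNReal.toReal_ofReal (cdf_nonneg _ _)]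
  simp

lemma map_cdf_map_comp (hr : Measurable r) [NullSingletonClass (π₀.map r)] :
    π₀.map (cdf (π₀.map r) ∘ r) = volume.restrict (Ioc 0 1) := by
  have := Measure.isProbabilityMeasure_map (μ := π₀) hr.aemeasurable
  rw [← Measure.map_map (monotone_cdf _).measurable hr, map_cdf]

end Reward

lemma integral_natCast_mul_one_sub_pow (n : ℕ) (a : ℝ) :
    ∫ u in 0..a, (n : ℝ) * (1 - u) ^ (n - 1) = 1 - (1 - a) ^ n := by
  have hderiv : ∀ u ∈ uIcc 0 a, HasDerivAt (fun x : ℝ => -(1 - x) ^ n) (n * (1 - u) ^ (n - 1)) u :=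
    fun u _ => (((hasDerivAt_id' u).const_sub 1).fun_pow n).fun_neg.congr_deriv (by ring)
  rw [intervalIntegral.integral_eq_sub_of_hasDerivAt hderiv
    (Continuous.intervalIntegrable (by fun_prop) _ _), sub_zero, one_pow]
  ring

section WorstOfN

variable {ι X Y : Type*} [Fintype ι] [MeasurableSpace X] [MeasurableSpace Y]

lemma measurable_iInf_comp_apply {r : Y → ℝ} (hr : Measurable r) :
    Measurable fun v : ι → Y => ⨅ i, r (v i) :=
  Measurable.iInf fun i => hr.comp (measurable_pi_apply i)

variable [Nonempty ι]

lemma lt_map_ciInf_iff {G : ℝ → ℝ} (hG : Monotone G) (f : ι → ℝ) {t : ℝ} :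
    t < G (⨅ i, f i) ↔ ∀ i, t < G (f i) := by
  obtain ⟨i₀, hi₀⟩ := exists_eq_ciInf_of_finite (f := f)
  refine ⟨fun h i => h.trans_le (hG (ciInf_le (finite_range f).bddBelow i)), fun h => ?_⟩
  rw [← hi₀]
  exact h i₀

lemma measure_pi_lt_map_iInf (ρ : Measure Y) [SigmaFinite ρ] {G : ℝ → ℝ} (hG : Monotone G)
    (r : Y → ℝ) (t : ℝ) :
    Measure.pi (fun _ : ι => ρ) {v | t < G (⨅ i, r (v i))}
      = ρ {y | t < G (r y)} ^ Fintype.card ι := by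
  have hset : {v : ι → Y | t < G (⨅ i, r (v i))} = univ.pi fun _ => {y | t < G (r y)} := by
    ext v
    simp [lt_map_ciInf_iff hG]
  rw [hset, Measure.pi_pi, Finset.prod_const, Finset.card_univ]

lemma measure_pi_iInf_lt (μ : Measure Y) [IsProbabilityMeasure μ] {r : Y → ℝ} (hr : Measurable r)
    [NullSingletonClass (μ.map r)] (t : ℝ) :
    Measure.pi (fun _ : ι => μ) {v | ⨅ i, r (v i) < t}
      = ENNReal.ofReal (1 - (1 - cdf (μ.map r) t) ^ Fintype.card ι) := by
  have hle : μ {y | t ≤ r y} = ENNReal.ofReal (1 - cdf (μ.map r) t) := by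
    have hcompl : {y | t ≤ r y} = {y | r y < t}ᶜ := by ext; simp
    rw [hcompl, prob_compl_eq_one_sub (measurableSet_lt hr measurable_const),
      measure_lt_eq_ofReal_cdf_map hr, ENNReal.ofReal_sub _ (cdf_nonneg _ _), ENNReal.ofReal_one]
  have hset : {v : ι → Y | ⨅ i, r (v i) < t} = (univ.pi fun _ => {y | t ≤ r y})ᶜ := by
    ext v
    simp [ciInf_lt_iff (finite_range _).bddBelow]
  rw [hset,
    prob_compl_eq_one_sub (MeasurableSet.univ_pi fun _ => measurableSet_le measurable_const hr),
    Measure.pi_pi, Finset.prod_const, Finset.card_univ, hle,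
    ← ENNReal.ofReal_pow (sub_nonneg.2 (cdf_le_one _ _)), ← ENNReal.ofReal_one,
    ← ENNReal.ofReal_sub _ (pow_nonneg (sub_nonneg.2 (cdf_le_one _ _)) _)]

lemma measure_pi_iInf_eq_null (μ : Measure Y) [SigmaFinite μ] {r : Y → ℝ}
    (hcont : ∀ t, μ {y | r y = t} = 0) (t : ℝ) :
    Measure.pi (fun _ : ι => μ) {v | ⨅ i, r (v i) = t} = 0 := by
  refine measure_mono_null (fun v (hv : _ = t) => ?_) (measure_iUnion_null fun i =>
    Measure.pi_eval_preimage_null (fun _ => μ) (i := i) (hcont t))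
  obtain ⟨i, hi⟩ := exists_eq_ciInf_of_finite (f := fun i => r (v i))
  exact mem_iUnion.2 ⟨i, hi.trans hv⟩

theorem measure_prod_pi_iInf_lt (ν : Measure X) [SFinite ν] (μ : Measure Y) [IsProbabilityMeasure μ]
    {r : Y → ℝ} (hr : Measurable r) [NullSingletonClass (μ.map r)] {s : X → ℝ} (hs : Measurable s) :
    (ν.prod (Measure.pi fun _ : ι => μ)) {p | ⨅ j, r (p.2 j) < s p.1}
      = ∫⁻ u in Ioo 0 1, ν {x | u < cdf (μ.map r) (s x)}
          * ENNReal.ofReal (Fintype.card ι * (1 - u) ^ (Fintype.card ι - 1)) := by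
  set n := Fintype.card ι
  set G := cdf (μ.map r)
  -- clipping at 1 makes the weight nonnegative on all of `Ioi 0`, as the layer-cake formula needs
  set g : ℝ → ℝ := fun u => n * (1 - min u 1) ^ (n - 1)
  have hg : ∀ u ≤ 1, g u = n * (1 - u) ^ (n - 1) := fun u hu => by simp [g, min_eq_left hu]
  have hslice : ∀ x, (Measure.pi fun _ : ι => μ) (Prod.mk x ⁻¹' {p | ⨅ j, r (p.2 j) < s p.1})
      = ENNReal.ofReal (∫ u in 0..G (s x), g u) := fun x => by
    rw [intervalIntegral.integral_congr fun u hu => hg u ((uIcc_subset_Icc ⟨le_rfl, zero_le_one⟩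
      ⟨cdf_nonneg _ _, cdf_le_one _ _⟩ hu).2), integral_natCast_mul_one_sub_pow]
    exact measure_pi_iInf_lt μ hr (s x)
  have hmeas : MeasurableSet {p : X × (ι → Y) | ⨅ j, r (p.2 j) < s p.1} :=
    measurableSet_lt ((measurable_iInf_comp_apply hr).comp measurable_snd)
      (hs.comp measurable_fst)
  rw [Measure.prod_apply hmeas, lintegral_congr hslice,
    lintegral_comp_eq_lintegral_meas_lt_mul ν (ae_of_all _ fun x => cdf_nonneg _ _)
      ((monotone_cdf _).measurable.comp hs).aemeasurable
      (fun _ _ => (by fun_prop : Continuous g).intervalIntegrable _ _)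
      (ae_of_all _ fun u =>
        mul_nonneg n.cast_nonneg (pow_nonneg (sub_nonneg.2 (min_le_right _ _)) _)),
    ← Ioo_union_Ici_eq_Ioi zero_lt_one, lintegral_union measurableSet_Ici
      ((Iio_disjoint_Ici le_rfl).mono_left Ioo_subset_Iio_self),
    setLIntegral_eq_zero measurableSet_Ici fun u (hu : 1 ≤ u) => ?_, add_zero]
  · exact setLIntegral_congr_fun measurableSet_Ioo fun u hu => by rw [hg u hu.2.le]
  · have hempty : {x | u < G (s x)} = ∅ :=
      eq_empty_of_forall_notMem fun x hx => (hu.trans_lt hx).not_ge (cdf_le_one _ _)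
    show ν {x | u < G (s x)} * ENNReal.ofReal (g u) = 0
    rw [hempty, measure_empty, zero_mul]

theorem measureReal_prod_pi_iInf_lt_iInf (ρ μ : Measure Y) [IsFiniteMeasure ρ]
    [IsProbabilityMeasure μ] {r : Y → ℝ} (hr : Measurable r) [NullSingletonClass (μ.map r)] :
    ((Measure.pi fun _ : ι => ρ).prod (Measure.pi fun _ : ι => μ)).real
        {p | ⨅ j, r (p.2 j) < ⨅ i, r (p.1 i)}
      = Fintype.card ι * ∫ u in 0..1, ρ.real {y | u < cdf (μ.map r) (r y)} ^ Fintype.card ι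
          * (1 - u) ^ (Fintype.card ι - 1) := by
  set n := Fintype.card ι
  set T : ℝ → ℝ := fun u => ρ.real {y | u < cdf (μ.map r) (r y)}
  have hT : Antitone T := fun u u' h =>
    measureReal_mono fun y (hy : u' < _) => show u < _ from h.trans_lt hy
  have hintegrand : EqOn
      (fun u => (Measure.pi fun _ : ι => ρ) {v | u < cdf (μ.map r) (⨅ i, r (v i))}
        * ENNReal.ofReal (n * (1 - u) ^ (n - 1)))
      (fun u => ENNReal.ofReal (n * (T u ^ n * (1 - u) ^ (n - 1)))) (Ioo 0 1) := fun u hu => by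
    simp only [measure_pi_lt_map_iInf ρ (monotone_cdf _) r u]
    rw [← ofReal_measureReal, ← ENNReal.ofReal_pow measureReal_nonneg,
      ← ENNReal.ofReal_mul (pow_nonneg measureReal_nonneg _)]
    congr 1
    ring
  rw [measureReal_def, measure_prod_pi_iInf_lt _ μ hr (measurable_iInf_comp_apply hr),
    setLIntegral_congr_fun measurableSet_Ioo hintegrand, ← integral_eq_lintegral_of_nonneg_ae,
    ← integral_Ioc_eq_integral_Ioo, ← intervalIntegral.integral_of_le zero_le_one,
    intervalIntegral.integral_const_mul]
  · exact (ae_restrict_iff' measurableSet_Ioo).2 (ae_of_all _ fun u hu =>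
      mul_nonneg n.cast_nonneg (mul_nonneg (pow_nonneg measureReal_nonneg _)
        (pow_nonneg (sub_nonneg.2 hu.2.le) _)))
  · exact (measurable_const.mul ((hT.measurable.pow_const n).mul
      (by fun_prop))).aestronglyMeasurable

theorem measure_prod_eq_pi_iInf_null (ν : Measure X) [SFinite ν] (μ : Measure Y) [SigmaFinite μ]
    {r : Y → ℝ} (hr : Measurable r) (hcont : ∀ t, μ {y | r y = t} = 0) {s : X → ℝ}
    (hs : Measurable s) :
    (ν.prod (Measure.pi fun _ : ι => μ)) {p | s p.1 = ⨅ j, r (p.2 j)} = 0 := by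
  refine (Measure.measure_prod_null (measurableSet_eq_fun (hs.comp measurable_fst)
    ((measurable_iInf_comp_apply hr).comp measurable_snd))).2
    (ae_of_all _ fun x => ?_)
  show (Measure.pi fun _ : ι => μ) {z | s x = ⨅ j, r (z j)} = 0
  simp_rw [eq_comm (a := s x)]
  exact measure_pi_iInf_eq_null μ hcont (s x)

end WorstOfN

section Density

lemma map_withDensity_comp {α β : Type*} [MeasurableSpace α] [MeasurableSpace β] {μ : Measure α}
    {g : α → β} (hg : Measurable g) {f : β → ℝ≥0∞} (hf : Measurable f) :
    (μ.withDensity fun a => f (g a)).map g = (μ.map g).withDensity f := by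
  ext s hs
  rw [Measure.map_apply hg hs, withDensity_apply _ (hg hs), withDensity_apply _ hs,
    setLIntegral_map hs hf hg]

lemma integrableOn_exp_div {α : Type*} [MeasurableSpace α] {μ : Measure α} {Φ : α → ℝ}
    (hΦm : Measurable Φ) {s : Set α} (hsm : MeasurableSet s) (hs : μ s < ∞) {M : ℝ}
    (hM : ∀ u ∈ s, |Φ u| ≤ M) (β : ℝ) :
    IntegrableOn (fun t => Real.exp (Φ t / β)) s μ := by
  refine .of_bound hs (hΦm.div_const β).exp.aestronglyMeasurable (Real.exp (M / |β|))
    (ae_restrict_of_forall_mem hsm fun u hu => ?_)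
  rw [Real.norm_eq_abs, Real.abs_exp, Real.exp_le_exp]
  exact (le_abs_self _).trans
    (abs_div (Φ u) β ▸ div_le_div_of_nonneg_right (hM u hu) (abs_nonneg β))

lemma intervalIntegral_pos_of_integrableOn_Icc {f : ℝ → ℝ} {a b : ℝ} (hab : a < b)
    (hf0 : ∀ t, 0 < f t) (hf : IntegrableOn f (Icc a b)) : 0 < ∫ t in a..b, f t :=
  intervalIntegral.intervalIntegral_pos_of_pos_on
    ((intervalIntegrable_iff_integrableOn_Icc_of_le hab.le).2 hf) (fun t _ => hf0 t) hab

variable {Y : Type*} [MeasurableSpace Y] {π₀ : Measure Y} {C : Y → ℝ}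

lemma withDensity_comp_apply_preimage (hC : Measurable C)
    (hmap : π₀.map C = volume.restrict (Ioc 0 1)) {g : ℝ → ℝ} (hgm : Measurable g)
    (hg : IntegrableOn g (Ioc 0 1)) (hg0 : ∀ t, 0 ≤ g t) {s : Set ℝ} (hs : MeasurableSet s)
    {a : ℝ} (ha : a ≤ 1) (hsa : s ∩ Ioc 0 1 = Ioc a 1) :
    π₀.withDensity (fun y => ENNReal.ofReal (g (C y))) (C ⁻¹' s)
      = ENNReal.ofReal (∫ t in a..1, g t) := by
  rw [← Measure.map_apply hC hs,
    map_withDensity_comp (f := fun t => ENNReal.ofReal (g t)) hC hgm.ennreal_ofReal, hmap,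
    withDensity_apply _ hs, Measure.restrict_restrict hs, hsa, intervalIntegral.integral_of_le ha,
    ofReal_integral_eq_lintegral_ofReal (hg.mono_set (hsa ▸ inter_subset_right))
      (ae_of_all _ fun t => hg0 t)]

variable {E : ℝ → ℝ}

lemma withDensity_comp_div_integral_apply_preimage (hC : Measurable C)
    (hmap : π₀.map C = volume.restrict (Ioc 0 1)) (hEm : Measurable E) (hE0 : ∀ t, 0 < E t)
    (hE : IntegrableOn E (Icc 0 1)) {s : Set ℝ} (hs : MeasurableSet s) {a : ℝ}
    (ha : a ≤ 1) (hsa : s ∩ Ioc 0 1 = Ioc a 1) :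
    π₀.withDensity (fun y => ENNReal.ofReal (E (C y) / ∫ t in 0..1, E t)) (C ⁻¹' s)
      = ENNReal.ofReal ((∫ t in a..1, E t) / ∫ t in 0..1, E t) := by
  have hZ := intervalIntegral_pos_of_integrableOn_Icc zero_lt_one hE0 hE
  rw [withDensity_comp_apply_preimage hC hmap (g := fun t => E t / ∫ t in 0..1, E t)
    (hEm.div_const _) ((hE.mono_set Ioc_subset_Icc_self).div_const _)
    (fun t => div_nonneg (hE0 t).le hZ.le) hs ha hsa, intervalIntegral.integral_div]

lemma isProbabilityMeasure_withDensity_comp_div_integral (hC : Measurable C)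
    (hmap : π₀.map C = volume.restrict (Ioc 0 1)) (hEm : Measurable E) (hE0 : ∀ t, 0 < E t)
    (hE : IntegrableOn E (Icc 0 1)) :
    IsProbabilityMeasure
      (π₀.withDensity fun y => ENNReal.ofReal (E (C y) / ∫ t in 0..1, E t)) := ⟨by
  rw [← preimage_univ, withDensity_comp_div_integral_apply_preimage hC hmap hEm hE0 hE
    MeasurableSet.univ zero_le_one (univ_inter _), div_self, ENNReal.ofReal_one]
  exact (intervalIntegral_pos_of_integrableOn_Icc zero_lt_one hE0 hE).ne'⟩

lemma measureReal_withDensity_comp_div_integral_lt (hC : Measurable C)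
    (hmap : π₀.map C = volume.restrict (Ioc 0 1)) (hEm : Measurable E) (hE0 : ∀ t, 0 < E t)
    (hE : IntegrableOn E (Icc 0 1)) {u : ℝ} (hu : u ∈ Icc (0 : ℝ) 1) :
    (π₀.withDensity fun y => ENNReal.ofReal (E (C y) / ∫ t in 0..1, E t)).real {y | u < C y}
      = 1 - (∫ t in 0..u, E t) / ∫ t in 0..1, E t := by
  have hE' : ∀ a ∈ Icc (0 : ℝ) 1, ∀ b ∈ Icc (0 : ℝ) 1, IntervalIntegrable E volume a b :=
    fun a ha b hb => (hE.mono_set (uIcc_subset_Icc ha hb)).intervalIntegrable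
  have hZ := intervalIntegral_pos_of_integrableOn_Icc zero_lt_one hE0 hE
  rw [measureReal_def, show {y | u < C y} = C ⁻¹' Ioi u from rfl,
    withDensity_comp_div_integral_apply_preimage hC hmap hEm hE0 hE measurableSet_Ioi hu.2
      (by rw [inter_comm, Ioc_inter_Ioi, max_eq_right hu.1]),
    ENNReal.toReal_ofReal (div_nonneg (intervalIntegral.integral_nonneg hu.2
      fun t _ => (hE0 t).le) hZ.le),
    eq_sub_iff_add_eq, ← add_div, add_comm, intervalIntegral.integral_add_adjacent_intervals
      (hE' 0 ⟨le_rfl, zero_le_one⟩ u hu) (hE' u hu 1 ⟨zero_le_one, le_rfl⟩), div_self hZ.ne']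

end Density

theorem stmt_11_general {Y : Type*} [MeasurableSpace Y]
    (π₀ : Measure Y) [IsProbabilityMeasure π₀]
    (r : Y → ℝ) (hr : Measurable r)
    (hcont : ∀ t : ℝ, π₀ {z | r z = t} = 0)
    (β : ℝ)
    (Φ : ℝ → ℝ) (hΦm : Measurable Φ)
    (hΦb : ∃ M, ∀ u ∈ Set.Icc (0 : ℝ) 1, |Φ u| ≤ M)
    (C : Y → ℝ)
    (hC : ∀ y, C y = (π₀ {z | r z < r y}).toReal + (1 / 2) * (π₀ {z | r z = r y}).toReal)
    (Z : ℝ) (hZ : Z = ∫ u in (0 : ℝ)..1, Real.exp (Φ u / β))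
    (πstar : Measure Y)
    (hπstar : πstar = π₀.withDensity fun y => ENNReal.ofReal (Real.exp (Φ (C y) / β) / Z))
    (F : ℝ → ℝ)
    (hF : ∀ u, F u = (∫ t in (0 : ℝ)..u, Real.exp (Φ t / β)) / Z)
    (N : ℕ) (hN : 1 ≤ N) :
    (((Measure.pi fun _ : Fin N => πstar).prod (Measure.pi fun _ : Fin N => π₀))
        {p : (Fin N → Y) × (Fin N → Y) | (⨅ j, r (p.2 j)) < ⨅ i, r (p.1 i)}).toReal
      = N * ∫ u in (0 : ℝ)..1, (1 - F u) ^ N * (1 - u) ^ (N - 1)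
    ∧ ((Measure.pi fun _ : Fin N => πstar).prod (Measure.pi fun _ : Fin N => π₀))
        {p : (Fin N → Y) × (Fin N → Y) | (⨅ i, r (p.1 i)) = ⨅ j, r (p.2 j)} = 0 := by
  have : NullSingletonClass (π₀.map r) := nullSingletonClass_map hr hcont
  have : Nonempty (Fin N) := Fin.pos_iff_nonempty.1 hN
  obtain rfl : C = cdf (π₀.map r) ∘ r :=
    funext fun y => (hC y).trans (calibrated_eq_cdf_map hr hcont y)
  subst hZ hπstar
  obtain rfl : F = _ := funext hF
  obtain ⟨M, hM⟩ := hΦb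
  have hE : IntegrableOn (fun t => Real.exp (Φ t / β)) (Icc 0 1) :=
    integrableOn_exp_div hΦm measurableSet_Icc measure_Icc_lt_top hM β
  have hCm : Measurable (cdf (π₀.map r) ∘ r) := (monotone_cdf _).measurable.comp hr
  have hmap := map_cdf_map_comp (π₀ := π₀) hr
  have hEm : Measurable fun t => Real.exp (Φ t / β) := by fun_prop
  have := isProbabilityMeasure_withDensity_comp_div_integral hCm hmap hEm
    (fun _ => Real.exp_pos _) hE
  refine ⟨?_, measure_prod_eq_pi_iInf_null _ π₀ hr hcont (measurable_iInf_comp_apply hr)⟩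
  rw [← measureReal_def, measureReal_prod_pi_iInf_lt_iInf _ π₀ hr, Fintype.card_fin]
  congr 1
  refine intervalIntegral.integral_congr fun u hu => ?_
  rw [uIcc_of_le zero_le_one] at hu
  exact congrArg (· ^ N * (1 - u) ^ (N - 1))
    (measureReal_withDensity_comp_div_integral_lt hCm hmap hEm (fun _ => Real.exp_pos _) hE hu)

/-- In the setting of Statement 10, for every `N ≥ 1` the Worst-of-`N` win
rate of `π*` against `π₀` equals `N·∫₀¹ (1 − F_{Φ,β}(u))^N (1−u)^{N−1} du`, and ties have
probability 0. -/
theorem stmt_11 {Y : Type*} [MeasurableSpace Y]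
    (π₀ : Measure Y) [IsProbabilityMeasure π₀]
    (r : Y → ℝ) (hr : Measurable r)
    (hcont : ∀ t : ℝ, π₀ {z | r z = t} = 0)
    (β : ℝ) (hβ : 0 < β)
    (Φ : ℝ → ℝ) (hΦm : Measurable Φ)
    (hΦb : ∃ M, ∀ u ∈ Set.Icc (0 : ℝ) 1, |Φ u| ≤ M)
    (C : Y → ℝ)
    (hC : ∀ y, C y = (π₀ {z | r z < r y}).toReal + (1 / 2) * (π₀ {z | r z = r y}).toReal)
    (Z : ℝ) (hZ : Z = ∫ u in (0 : ℝ)..1, Real.exp (Φ u / β))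
    (πstar : Measure Y)
    (hπstar : πstar = π₀.withDensity fun y => ENNReal.ofReal (Real.exp (Φ (C y) / β) / Z))
    (F : ℝ → ℝ)
    (hF : ∀ u, F u = (∫ t in (0 : ℝ)..u, Real.exp (Φ t / β)) / Z)
    (N : ℕ) (hN : 1 ≤ N) :
    (((Measure.pi fun _ : Fin N => πstar).prod (Measure.pi fun _ : Fin N => π₀))
        {p : (Fin N → Y) × (Fin N → Y) | (⨅ j, r (p.2 j)) < ⨅ i, r (p.1 i)}).toReal
      = N * ∫ u in (0 : ℝ)..1, (1 - F u) ^ N * (1 - u) ^ (N - 1)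
    ∧ ((Measure.pi fun _ : Fin N => πstar).prod (Measure.pi fun _ : Fin N => π₀))
        {p : (Fin N → Y) × (Fin N → Y) | (⨅ i, r (p.1 i)) = ⨅ j, r (p.2 j)} = 0 :=
  stmt_11_general π₀ r hr hcont β Φ hΦm hΦb C hC Z hZ πstar hπstar F hF N hN
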